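/- arXiv:0801.3617 — 4 statements merged into one kernel-verified Lean document; each statement's English description precedes it below -/
import Mathlib

section
/- Let A be a C*-algebra, let E and F be Hilbert A-modules, and let T : E → F be a map admitting an adjoint S : F → E (i.e. ⟪T x, y⟫ = ⟪x, S y⟫ for all x ∈ E, y ∈ F). Then T is continuous (bounded). (Automatic continuity of adjointable maps, proved via the closed graph theorem using that the graph of T is the orthogonal of {(−S y, y) : y ∈ F}.) -/
open scoped RightActions

/-- The Hilbert C⋆-module class as it stood in Mathlib (Dec 2024): right action of `Aᵐᵒᵖ`,
inner product `A`-linear on the right in the second variable. -/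
class CStarModuleRight (A E : Type*) [NonUnitalSemiring A] [StarRing A] [Module ℂ A]
    [AddCommGroup E] [Module ℂ E] [PartialOrder A] [SMul Aᵐᵒᵖ E] [Norm A] [Norm E]
    extends Inner A E where
  inner_add_right {x} {y} {z} : inner x (y + z) = inner x y + inner x z
  inner_self_nonneg {x} : 0 ≤ inner x x
  inner_self {x} : inner x x = 0 ↔ x = 0
  inner_op_smul_right {a : A} {x y : E} : inner x (y <• a) = inner x y * a
  inner_smul_right_complex {z : ℂ} {x} {y} : inner x (z • y) = z • inner x y
  star_inner x y : star (inner x y) = inner y x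
  norm_eq_sqrt_norm_inner_self x : ‖x‖ = √‖inner x x‖

variable {A : Type*} [CStarAlgebra A] [PartialOrder A] [StarOrderedRing A]
variable {E : Type*} [NormedAddCommGroup E] [NormedSpace ℂ E] [SMul Aᵐᵒᵖ E]
  [CStarModuleRight A E] [CompleteSpace E]
variable {F : Type*} [NormedAddCommGroup F] [NormedSpace ℂ F] [SMul Aᵐᵒᵖ F]
  [CStarModuleRight A F] [CompleteSpace F]

local notation "⟪" x ", " y "⟫" => inner (𝕜 := A) x y

namespace CStarModuleRight

variable {G : Type*} [NormedAddCommGroup G] [NormedSpace ℂ G] [SMul Aᵐᵒᵖ G] [CStarModuleRight A G]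

section algebraic

omit [StarOrderedRing A]

lemma inner_add_left {x y z : G} : ⟪x + y, z⟫ = ⟪x, z⟫ + ⟪y, z⟫ := by
  rw [← star_inner, inner_add_right, star_add, star_inner, star_inner]

lemma inner_sub_left {x y z : G} : ⟪x - y, z⟫ = ⟪x, z⟫ - ⟪y, z⟫ :=
  eq_sub_of_add_eq (by rw [← inner_add_left, sub_add_cancel])

lemma inner_smul_left_complex {c : ℂ} {x z : G} : ⟪c • x, z⟫ = star c • ⟪x, z⟫ := by
  rw [← star_inner, inner_smul_right_complex, star_smul, star_inner]

lemma ext_inner_left_iff {a b : G} : (∀ y : G, ⟪a, y⟫ = ⟪b, y⟫) ↔ a = b := by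
  refine ⟨fun h => sub_eq_zero.mp ?_, fun h _ => h ▸ rfl⟩
  rw [← inner_self (A := A), inner_sub_left, h, sub_self]

end algebraic

noncomputable abbrev toCStarModuleMulOpposite : CStarModule Aᵐᵒᵖ G where
  inner x y := MulOpposite.op ⟪x, y⟫
  inner_add_right := by simp only [inner_add_right, MulOpposite.op_add, implies_true]
  inner_self_nonneg := inner_self_nonneg
  inner_self := by simp only [MulOpposite.op_eq_zero_iff, inner_self, implies_true]
  inner_op_smul_right {a x y} := by
    rw [← MulOpposite.op_unop a, inner_op_smul_right, MulOpposite.op_mul, MulOpposite.op_unop]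
  inner_smul_right_complex := by
    simp only [inner_smul_right_complex, MulOpposite.op_smul, implies_true]
  star_inner x y := by rw [← MulOpposite.op_star, star_inner]
  norm_eq_sqrt_norm_inner_self x := by
    rw [MulOpposite.norm_op, norm_eq_sqrt_norm_inner_self (A := A)]

lemma continuous_inner : Continuous fun p : G × G => ⟪p.1, p.2⟫ :=
  letI : CStarModule Aᵐᵒᵖ G := toCStarModuleMulOpposite
  MulOpposite.continuous_unop.comp (CStarModule.continuous_inner (A := Aᵐᵒᵖ))

end CStarModuleRight

section adjoint

open CStarModuleRight

variable {G H : Type*} [NormedAddCommGroup G] [NormedSpace ℂ G] [SMul Aᵐᵒᵖ G]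
  [CStarModuleRight A G] [NormedAddCommGroup H] [NormedSpace ℂ H] [SMul Aᵐᵒᵖ H]
  [CStarModuleRight A H]

omit [StarOrderedRing A] in
lemma isLinearMap_of_adjoint (T : G → H) (S : H → G)
    (hS : ∀ x y, ⟪T x, y⟫ = ⟪x, S y⟫) : IsLinearMap ℂ T where
  map_add x x' := (ext_inner_left_iff (A := A)).mp fun y => by
    simp only [hS, CStarModuleRight.inner_add_left]
  map_smul c x := (ext_inner_left_iff (A := A)).mp fun y => by
    simp only [hS, inner_smul_left_complex]

/-- The graph of `T` is the set of pairs `(x, z)` with `⟪z, y⟫ = ⟪x, S y⟫` for all `y`, an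
intersection of closed sets. -/
lemma isClosed_graph_of_adjoint (T : G → H) (S : H → G)
    (hS : ∀ x y, ⟪T x, y⟫ = ⟪x, S y⟫) : IsClosed {p : G × H | p.2 = T p.1} := by
  have graph_eq : {p : G × H | p.2 = T p.1} = ⋂ y, {p | ⟪p.2, y⟫ = ⟪p.1, S y⟫} := by
    ext p
    simp only [Set.mem_ofPred_eq, Set.mem_iInter, ← hS, ext_inner_left_iff]
  rw [graph_eq]
  exact isClosed_iInter fun y =>
    isClosed_eq (continuous_inner.comp (continuous_snd.prodMk continuous_const))
      (continuous_inner.comp (continuous_fst.prodMk continuous_const))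

end adjoint

/-- An adjointable map between Hilbert C*-modules is automatically continuous. -/
theorem adjointable_continuous (T : E → F) (S : F → E)
    (hS : ∀ (x : E) (y : F), ⟪T x, y⟫ = ⟪x, S y⟫) :
    Continuous T := by
  let Tₗ : E →ₗ[ℂ] F := (isLinearMap_of_adjoint T S hS).mk' T
  exact Tₗ.continuous_of_isClosed_graph (isClosed_graph_of_adjoint T S hS)
end

section
/- Let A be a C*-algebra, let E and F be Hilbert A-modules, and let T : E → F be a continuous linear map with adjoint S : F → E. Then the closure of the range of S equals the closure of the range of S ∘ T : E → E, i.e. closure(S(F)) = closure((S ∘ T)(E)). (Proved using the norm-convergence T* = lim T*(1/n + TT*)^{-1} T T*.) -/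
/-
The adjointable operators on `F` form a C⋆-algebra in which `b = T ∘ S` is self-adjoint.
Functional calculus with `t ↦ t / (δ² + t²)` gives `g` with `‖1 - b g‖ ≤ 1` and
`‖b (1 - b g)‖ ≤ δ`. For `w = (1 - b g) y` we have `S y - S T (S (g y)) = S w` and
`‖S w‖² = ‖⟪w, b w⟫‖ ≤ ‖w‖ ‖b w‖ ≤ δ ‖y‖²`, so `S y` lies in the closure of the range of `S ∘ T`.
-/

open scoped RightActions

/-- The class `CStarModule` as it stood in the older Mathlib (right Hilbert modules, with
`Aᵐᵒᵖ` acting on `E`); Mathlib's `CStarModule` now describes left modules. -/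
class RightCStarModule (A E : Type*) [NonUnitalSemiring A] [StarRing A]
    [Module ℂ A] [AddCommGroup E] [Module ℂ E] [PartialOrder A] [SMul Aᵐᵒᵖ E] [Norm A] [Norm E]
    extends Inner A E where
  inner_add_right {x} {y} {z} : inner x (y + z) = inner x y + inner x z
  inner_self_nonneg {x} : 0 ≤ inner x x
  inner_self {x} : inner x x = 0 ↔ x = 0
  inner_op_smul_right {a : A} {x y : E} : inner x (y <• a) = inner x y * a
  inner_smul_right_complex {z : ℂ} {x} {y} : inner x (z • y) = z • inner x y
  star_inner x y : star (inner x y) = inner y x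
  norm_eq_sqrt_norm_inner_self x : ‖x‖ = √‖inner x x‖

variable {A : Type*} [CStarAlgebra A] [PartialOrder A] [StarOrderedRing A]
variable {E : Type*} [NormedAddCommGroup E] [NormedSpace ℂ E] [SMul Aᵐᵒᵖ E]
  [RightCStarModule A E] [CompleteSpace E]
variable {F : Type*} [NormedAddCommGroup F] [NormedSpace ℂ F] [SMul Aᵐᵒᵖ F]
  [RightCStarModule A F] [CompleteSpace F]

local notation "⟪" x ", " y "⟫" => inner (𝕜 := A) x y

lemma IsSelfAdjoint.exists_norm_mul_one_sub_mul_le {B : Type*} [CStarAlgebra B] {b : B}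
    (hb : IsSelfAdjoint b) {δ : ℝ} (hδ : 0 < δ) :
    ∃ g : B, ‖1 - b * g‖ ≤ 1 ∧ ‖b * (1 - b * g)‖ ≤ δ := by
  have hpos : ∀ t : ℝ, 0 < δ ^ 2 + t ^ 2 := fun t => by positivity
  have hne : ∀ t : ℝ, δ ^ 2 + t ^ 2 ≠ 0 := fun t => (hpos t).ne'
  have hg : Continuous fun t : ℝ => t / (δ ^ 2 + t ^ 2) := by fun_prop (disch := exact hne)
  have hh : Continuous fun t : ℝ => δ ^ 2 / (δ ^ 2 + t ^ 2) := by fun_prop (disch := exact hne)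
  refine ⟨cfc (fun t : ℝ => t / (δ ^ 2 + t ^ 2)) b, ?_⟩
  have hsub : cfc (fun t : ℝ => δ ^ 2 / (δ ^ 2 + t ^ 2)) b
      = 1 - b * cfc (fun t : ℝ => t / (δ ^ 2 + t ^ 2)) b := by
    rw [cfc_congr (g := fun t : ℝ => 1 - t * (t / (δ ^ 2 + t ^ 2))) fun t _ => by
      field_simp [hne t]; ring, cfc_sub _ _ b, cfc_mul _ _ b (hg := hg.continuousOn), cfc_id' ..,
      cfc_const_one ..]
  have hmul : cfc (fun t : ℝ => t * (δ ^ 2 / (δ ^ 2 + t ^ 2))) b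
      = b * cfc (fun t : ℝ => δ ^ 2 / (δ ^ 2 + t ^ 2)) b := by
    rw [cfc_mul _ _ b (hg := hh.continuousOn), cfc_id' ..]
  rw [← hsub, ← hmul]
  constructor
  · refine norm_cfc_le zero_le_one fun t _ => ?_
    rw [Real.norm_eq_abs, abs_of_pos (div_pos (pow_pos hδ 2) (hpos t)), div_le_one (hpos t)]
    nlinarith [sq_nonneg t]
  · -- `|t| δ² / (δ² + t²) ≤ δ` because `δ |t| ≤ δ² + t²`
    refine norm_cfc_le hδ.le fun t _ => ?_
    rw [Real.norm_eq_abs, abs_mul, abs_of_pos (div_pos (pow_pos hδ 2) (hpos t)), mul_div_assoc',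
      div_le_iff₀ (hpos t)]
    nlinarith [mul_nonneg hδ.le (sq_nonneg (|t| - δ)), sq_abs t, abs_nonneg t]

namespace RightCStarModule

/-- A right Hilbert `A`-module is a left Hilbert `Aᵐᵒᵖ`-module in the sense of Mathlib's
`CStarModule`; this gives us Cauchy–Schwarz and the continuity of the inner product. -/
instance toCStarModuleMulOpposite : CStarModule Aᵐᵒᵖ E where
  inner x y := MulOpposite.op ⟪x, y⟫
  inner_add_right := congrArg MulOpposite.op inner_add_right
  inner_self_nonneg := inner_self_nonneg
  inner_self := MulOpposite.op_eq_zero_iff _ |>.trans inner_self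
  inner_op_smul_right {a _ _} := congrArg MulOpposite.op (inner_op_smul_right (a := a.unop))
  inner_smul_right_complex := congrArg MulOpposite.op inner_smul_right_complex
  star_inner x y := congrArg MulOpposite.op (star_inner x y)
  norm_eq_sqrt_norm_inner_self x := norm_eq_sqrt_norm_inner_self x

variable {G : Type*} [NormedAddCommGroup G] [NormedSpace ℂ G] [SMul Aᵐᵒᵖ G]
  [RightCStarModule A G]

section

omit [StarOrderedRing A] [CompleteSpace E] [CompleteSpace F]

lemma inner_add_left (x y z : E) : ⟪x + y, z⟫ = ⟪x, z⟫ + ⟪y, z⟫ :=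
  congrArg MulOpposite.unop (CStarModule.inner_add_left (A := Aᵐᵒᵖ) (x := x) (y := y) (z := z))

lemma inner_sub_right (x y z : E) : ⟪x, y - z⟫ = ⟪x, y⟫ - ⟪x, z⟫ :=
  congrArg MulOpposite.unop (CStarModule.inner_sub_right (A := Aᵐᵒᵖ) (x := x) (y := y) (z := z))

lemma inner_smul_left_complex (z : ℂ) (x y : E) : ⟪z • x, y⟫ = star z • ⟪x, y⟫ :=
  congrArg MulOpposite.unop
    (CStarModule.inner_smul_left_complex (A := Aᵐᵒᵖ) (z := z) (x := x) (y := y))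

lemma ext_inner_left {x y : E} (h : ∀ v, ⟪v, x⟫ = ⟪v, y⟫) : x = y := by
  rw [← sub_eq_zero, ← inner_self (A := A), inner_sub_right, h, sub_self]

lemma norm_sq_eq (x : E) : ‖x‖ ^ 2 = ‖⟪x, x⟫‖ :=
  CStarModule.norm_sq_eq (A := Aᵐᵒᵖ) (x := x)

variable (A) in
def IsAdjointPair (a : E →L[ℂ] F) (b : F →L[ℂ] E) : Prop :=
  ∀ v w, ⟪a v, w⟫ = ⟪v, b w⟫

variable {a a' : E →L[ℂ] F} {b b' : F →L[ℂ] E}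

lemma IsAdjointPair.symm (h : IsAdjointPair A a b) : IsAdjointPair A b a := fun v w => by
  rw [← star_inner, ← h, star_inner]

lemma IsAdjointPair.comp {c : F →L[ℂ] G} {d : G →L[ℂ] F} (hab : IsAdjointPair A a b)
    (hcd : IsAdjointPair A c d) : IsAdjointPair A (c ∘L a) (b ∘L d) :=
  fun v w => (hcd (a v) w).trans (hab v (d w))

lemma IsAdjointPair.add (h : IsAdjointPair A a b) (h' : IsAdjointPair A a' b') :
    IsAdjointPair A (a + a') (b + b') := fun v w => by
  simp only [add_apply, inner_add_left, inner_add_right, h v w, h' v w]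

lemma IsAdjointPair.smul (h : IsAdjointPair A a b) (z : ℂ) :
    IsAdjointPair A (z • a) (star z • b) := fun v w => by
  simp only [smul_apply, inner_smul_left_complex, inner_smul_right_complex,
    h v w]

lemma IsAdjointPair.sub (h : IsAdjointPair A a b) (h' : IsAdjointPair A a' b') :
    IsAdjointPair A (a - a') (b - b') := by
  simpa [sub_eq_add_neg] using h.add (h'.smul (-1))

lemma isAdjointPair_one : IsAdjointPair A (1 : E →L[ℂ] E) 1 := fun _ _ => rfl

lemma IsAdjointPair.unique (h : IsAdjointPair A a b) (h' : IsAdjointPair A a b') : b = b' :=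
  ContinuousLinearMap.ext fun w => ext_inner_left fun v => (h v w).symm.trans (h' v w)

variable (A F) in
def adjointableSubalgebra : Subalgebra ℂ (F →L[ℂ] F) where
  carrier := {a | ∃ b, IsAdjointPair A a b}
  mul_mem' := fun ⟨b, hb⟩ ⟨b', hb'⟩ => ⟨b' * b, hb'.comp hb⟩
  add_mem' := fun ⟨b, hb⟩ ⟨b', hb'⟩ => ⟨b + b', hb.add hb'⟩
  algebraMap_mem' z := ⟨star z • 1, by
    rw [Algebra.algebraMap_eq_smul_one]; exact isAdjointPair_one.smul z⟩

namespace adjointableSubalgebra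

noncomputable instance : Star (adjointableSubalgebra A F) where
  star a := ⟨a.2.choose, a, a.2.choose_spec.symm⟩

lemma isAdjointPair_star (a : adjointableSubalgebra A F) :
    IsAdjointPair A a ((star a : adjointableSubalgebra A F) : F →L[ℂ] F) :=
  a.2.choose_spec

lemma coe_star {a : adjointableSubalgebra A F} {b : F →L[ℂ] F} (h : IsAdjointPair A a b) :
    ((star a : adjointableSubalgebra A F) : F →L[ℂ] F) = b :=
  (isAdjointPair_star a).unique h

noncomputable instance : StarRing (adjointableSubalgebra A F) where
  star_involutive a := Subtype.ext (coe_star (isAdjointPair_star a).symm)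
  star_mul a b := Subtype.ext (coe_star ((isAdjointPair_star b).comp (isAdjointPair_star a)))
  star_add a b := Subtype.ext (coe_star ((isAdjointPair_star a).add (isAdjointPair_star b)))

instance : StarModule ℂ (adjointableSubalgebra A F) where
  star_smul z a := Subtype.ext (coe_star ((isAdjointPair_star a).smul z))

end adjointableSubalgebra

end

omit [CompleteSpace E] [CompleteSpace F]

lemma norm_inner_le (x y : E) : ‖⟪x, y⟫‖ ≤ ‖x‖ * ‖y‖ :=
  CStarModule.norm_inner_le (A := Aᵐᵒᵖ) E

lemma continuous_inner : Continuous fun p : E × E => ⟪p.1, p.2⟫ :=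
  MulOpposite.continuous_unop.comp (CStarModule.continuous_inner (A := Aᵐᵒᵖ))

variable {a : E →L[ℂ] F} {b : F →L[ℂ] E}

lemma IsAdjointPair.norm_sq_apply_le (h : IsAdjointPair A a b) (v : E) :
    ‖a v‖ ^ 2 ≤ ‖v‖ * ‖b (a v)‖ := by
  rw [norm_sq_eq (A := A), h]
  exact norm_inner_le v _

lemma IsAdjointPair.opNorm_sq_le (h : IsAdjointPair A a b) : ‖a‖ ^ 2 ≤ ‖b ∘L a‖ := by
  have : ‖a‖ ≤ √‖b ∘L a‖ := a.opNorm_le_bound (Real.sqrt_nonneg _) fun v => by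
    rw [← Real.sqrt_sq (norm_nonneg (a v)), ← Real.sqrt_sq (norm_nonneg v),
      ← Real.sqrt_mul (norm_nonneg _)]
    refine Real.sqrt_le_sqrt ((h.norm_sq_apply_le v).trans ?_)
    calc ‖v‖ * ‖b (a v)‖ ≤ ‖v‖ * (‖b ∘L a‖ * ‖v‖) := by gcongr; exact (b ∘L a).le_opNorm v
      _ = ‖b ∘L a‖ * ‖v‖ ^ 2 := by ring
  calc ‖a‖ ^ 2 ≤ √‖b ∘L a‖ ^ 2 := by gcongr
    _ = ‖b ∘L a‖ := Real.sq_sqrt (norm_nonneg _)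

lemma IsAdjointPair.opNorm_le (h : IsAdjointPair A a b) : ‖b‖ ≤ ‖a‖ := by
  have := h.symm.opNorm_sq_le.trans (a.opNorm_comp_le b)
  nlinarith [norm_nonneg a, norm_nonneg b]

lemma isClosed_setOf_isAdjointPair :
    IsClosed {p : (E →L[ℂ] F) × (F →L[ℂ] E) | IsAdjointPair A p.1 p.2} := by
  simp only [IsAdjointPair, Set.ofPred_forall]
  refine isClosed_iInter fun v => isClosed_iInter fun w => isClosed_eq ?_ ?_
  · exact continuous_inner.comp
      ((continuous_fst.clm_apply continuous_const).prodMk continuous_const)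
  · exact continuous_inner.comp
      (continuous_const.prodMk (continuous_snd.clm_apply continuous_const))

namespace adjointableSubalgebra

instance : CStarRing (adjointableSubalgebra A F) where
  norm_mul_self_le a := by
    rw [← sq]
    exact (isAdjointPair_star a).opNorm_sq_le

lemma isClosed [CompleteSpace F] : IsClosed (adjointableSubalgebra A F : Set (F →L[ℂ] F)) := by
  refine isClosed_of_closure_subset fun a ha => ?_
  obtain ⟨u, hu, hua⟩ := mem_closure_iff_seq_limit.mp ha
  choose b hb using hu
  have hb_cauchy : CauchySeq b := by
    refine Metric.cauchySeq_iff.2 fun ε hε => ?_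
    obtain ⟨N, hN⟩ := Metric.cauchySeq_iff.1 hua.cauchySeq ε hε
    refine ⟨N, fun m hm n hn => lt_of_le_of_lt ?_ (hN m hm n hn)⟩
    simpa only [dist_eq_norm] using ((hb m).sub (hb n)).opNorm_le
  obtain ⟨b', hb'⟩ := cauchySeq_tendsto_of_complete hb_cauchy
  exact ⟨b', isClosed_setOf_isAdjointPair.mem_of_tendsto (hua.prodMk_nhds hb') (.of_forall hb)⟩

noncomputable instance : CStarAlgebra (adjointableSubalgebra A F) where
  toCompleteSpace := isClosed.completeSpace_coe

end adjointableSubalgebra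

lemma IsAdjointPair.apply_mem_closure_range_comp [CompleteSpace F] {T : E →L[ℂ] F}
    {S : F →L[ℂ] E} (h : IsAdjointPair A T S) (y : F) :
    S y ∈ closure (Set.range (S ∘L T)) := by
  let b : adjointableSubalgebra A F := ⟨T ∘L S, T ∘L S, h.symm.comp h⟩
  have hb : IsSelfAdjoint b := Subtype.ext (adjointableSubalgebra.coe_star (h.symm.comp h))
  refine Metric.mem_closure_iff.2 fun ε hε => ?_
  set δ := ε ^ 2 / (‖y‖ ^ 2 + 1)
  obtain ⟨g, hg, hbg⟩ := hb.exists_norm_mul_one_sub_mul_le (δ := δ) (by positivity)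
  let w := ((1 - b * g : adjointableSubalgebra A F) : F →L[ℂ] F) y
  have hw : S y - S (T (S ((g : F →L[ℂ] F) y))) = S w := by simp [w, b, map_sub]
  have hw_le : ‖w‖ ≤ ‖y‖ :=
    (ContinuousLinearMap.le_opNorm _ _).trans (mul_le_of_le_one_left (norm_nonneg y) hg)
  have hTSw_le : ‖T (S w)‖ ≤ δ * ‖y‖ :=
    (((b * (1 - b * g) : adjointableSubalgebra A F) : F →L[ℂ] F).le_opNorm y).trans
      (by gcongr; exact hbg)
  have : ‖S w‖ ^ 2 < ε ^ 2 := calc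
    ‖S w‖ ^ 2 ≤ ‖w‖ * ‖T (S w)‖ := h.symm.norm_sq_apply_le w
    _ ≤ ‖y‖ * (δ * ‖y‖) := by gcongr
    _ = ε ^ 2 * (‖y‖ ^ 2 / (‖y‖ ^ 2 + 1)) := by ring
    _ < ε ^ 2 :=
      mul_lt_of_lt_one_right (by positivity) ((div_lt_one (by positivity)).2 (by linarith))
  refine ⟨S (T (S ((g : F →L[ℂ] F) y))), ⟨S ((g : F →L[ℂ] F) y), rfl⟩, ?_⟩
  rw [dist_eq_norm, hw]
  exact lt_of_pow_lt_pow_left₀ 2 hε.le this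

end RightCStarModule

/-- For an adjointable operator T with adjoint S between Hilbert C*-modules, the closure
of the range of S equals the closure of the range of S ∘ T. -/
theorem closure_range_adjoint_eq (T : E →L[ℂ] F) (S : F →L[ℂ] E)
    (hS : ∀ (x : E) (y : F), ⟪T x, y⟫ = ⟪x, S y⟫) :
    closure (Set.range S) = closure (Set.range (S.comp T)) := by
  refine (closure_minimal ?_ isClosed_closure).antisymm (closure_mono ?_)
  · rintro _ ⟨y, rfl⟩
    exact RightCStarModule.IsAdjointPair.apply_mem_closure_range_comp hS y
  · rintro _ ⟨x, rfl⟩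
    exact ⟨T x, rfl⟩
end

section
/- Let A be a C*-algebra, let E and F be Hilbert A-modules, and let u : E → F be a continuous linear map with adjoint v : F → E which is a partial isometry, i.e. u ∘ v ∘ u = u. Then the range of u is closed, the range of v is closed, and there are orthogonal direct sum decompositions E = ker u ⊕ v(F) and F = ker v ⊕ u(E): every x ∈ E is uniquely x = x₁ + x₂ with u x₁ = 0 and x₂ ∈ v(F), with ⟪x₁, x₂⟫ = 0, and symmetrically for F. -/
/-! Orthogonality of `ker u` and `range v` is immediate from the adjoint relation, so
`ker u ∩ range v = 0`. The vector `v (u (v y)) - v y` lies in both, hence `v` is a partial isometry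
as well. Then `u ∘ v` and `v ∘ u` are idempotent: the ranges of `u` and `v` are the fixed-point
sets of these continuous maps, hence closed, and `x = (x - v (u x)) + v (u x)` is the
decomposition of `E`. -/

open scoped RightActions

theorem isClosed_range_of_comp_comp_eq {X Y : Type*} [TopologicalSpace X] [TopologicalSpace Y]
    [T2Space Y] {u : X → Y} {v : Y → X} (hu : Continuous u) (hv : Continuous v)
    (huvu : ∀ x, u (v (u x)) = u x) : IsClosed (Set.range u) := by
  have hrange : Set.range u = Function.fixedPoints (u ∘ v) :=
    Set.ext fun y => ⟨by rintro ⟨x, rfl⟩; exact huvu x, fun hy => ⟨v y, hy⟩⟩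
  rw [hrange]
  exact isClosed_fixedPoints (hu.comp hv)

theorem existsUnique_add_of_map_eq_zero_of_mem_range {M N G : Type*} [AddGroup M]
    [AddGroup N] [FunLike G M N] [AddMonoidHomClass G M N] {u : G} {v : N → M}
    (huvu : ∀ x, u (v (u x)) = u x) (hvuv : ∀ y, v (u (v y)) = v y) (x : M) :
    ∃! p : M × M, x = p.1 + p.2 ∧ u p.1 = 0 ∧ p.2 ∈ Set.range v := by
  refine ⟨(x - v (u x), v (u x)), ⟨(sub_add_cancel x _).symm, ?_, u x, rfl⟩, ?_⟩
  · rw [map_sub, huvu, sub_self]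
  rintro ⟨x₁, x₂⟩ ⟨rfl, hx₁, y, rfl⟩
  have hproj : v (u (x₁ + v y)) = v y := by rw [map_add, hx₁, zero_add, hvuv]
  simp only [hproj, add_sub_cancel_right]

namespace CStarModuleRight

variable {A E F : Type*} [NonUnitalRing A] [StarRing A] [Module ℂ A] [PartialOrder A] [Norm A]
  [AddCommGroup E] [Module ℂ E] [SMul Aᵐᵒᵖ E] [Norm E] [CStarModuleRight A E]
  [AddCommGroup F] [Module ℂ F] [SMul Aᵐᵒᵖ F] [Norm F] [CStarModuleRight A F]

local notation "⟪" x ", " y "⟫" => inner (𝕜 := A) x y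

theorem inner_zero_right (x : E) : ⟪x, (0 : E)⟫ = 0 := by
  have h : ⟪x, (0 : E) + 0⟫ = ⟪x, 0⟫ + ⟪x, 0⟫ := inner_add_right
  rwa [add_zero, left_eq_add] at h

theorem inner_zero_left (x : E) : ⟪(0 : E), x⟫ = 0 := by
  rw [← star_inner, inner_zero_right, star_zero]

variable (A) in
def IsAdjoint (u : E → F) (v : F → E) : Prop :=
  ∀ x y, ⟪u x, y⟫ = ⟪x, v y⟫

theorem IsAdjoint.symm {u : E → F} {v : F → E} (h : IsAdjoint A u v) : IsAdjoint A v u :=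
  fun y x => by rw [← star_inner, ← h, star_inner]

theorem IsAdjoint.inner_eq_zero_of_map_eq_zero {u : E → F} {v : F → E} (h : IsAdjoint A u v)
    {x₁ x₂ : E} (hx₁ : u x₁ = 0) (hx₂ : x₂ ∈ Set.range v) : ⟪x₁, x₂⟫ = 0 := by
  obtain ⟨y, rfl⟩ := hx₂
  rw [← h, hx₁, inner_zero_left]

theorem IsAdjoint.eq_zero_of_map_eq_zero_of_mem_range {u : E → F} {v : F → E}
    (h : IsAdjoint A u v) {x : E} (hx : u x = 0) (hxv : x ∈ Set.range v) : x = 0 :=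
  inner_self.mp (h.inner_eq_zero_of_map_eq_zero hx hxv)

/-- The adjoint of a partial isometry is a partial isometry. -/
theorem IsAdjoint.map_map_map_eq {G H : Type*} [FunLike G E F] [AddMonoidHomClass G E F]
    [FunLike H F E] [AddMonoidHomClass H F E] {u : G} {v : H} (h : IsAdjoint A u v)
    (huvu : ∀ x, u (v (u x)) = u x) (y : F) : v (u (v y)) = v y := by
  have hker : u (v (u (v y)) - v y) = 0 := by rw [map_sub, huvu, sub_self]
  have hrange : v (u (v y)) - v y ∈ Set.range v := ⟨u (v y) - y, map_sub v _ _⟩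
  exact sub_eq_zero.mp (h.eq_zero_of_map_eq_zero_of_mem_range hker hrange)

end CStarModuleRight

variable {A : Type*} [CStarAlgebra A] [PartialOrder A] [StarOrderedRing A]
variable {E : Type*} [NormedAddCommGroup E] [NormedSpace ℂ E] [SMul Aᵐᵒᵖ E]
  [CStarModuleRight A E] [CompleteSpace E]
variable {F : Type*} [NormedAddCommGroup F] [NormedSpace ℂ F] [SMul Aᵐᵒᵖ F]
  [CStarModuleRight A F] [CompleteSpace F]

local notation "⟪" x ", " y "⟫" => inner (𝕜 := A) x y

/-- A partial isometry u between Hilbert C*-modules has closed range, its adjoint v has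
closed range, and E = ker u ⊕ v(F), F = ker v ⊕ u(E) as orthogonal direct sums. -/
theorem partial_isometry_decomposition (u : E →L[ℂ] F) (v : F →L[ℂ] E)
    (hv : ∀ (x : E) (y : F), ⟪u x, y⟫ = ⟪x, v y⟫)
    (hpi : ∀ x : E, u (v (u x)) = u x) :
    IsClosed (Set.range u) ∧ IsClosed (Set.range v) ∧
    (∀ x : E, ∃! p : E × E, x = p.1 + p.2 ∧ u p.1 = 0 ∧ p.2 ∈ Set.range v) ∧
    (∀ x₁ x₂ : E, u x₁ = 0 → x₂ ∈ Set.range v → ⟪x₁, x₂⟫ = 0) ∧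
    (∀ y : F, ∃! q : F × F, y = q.1 + q.2 ∧ v q.1 = 0 ∧ q.2 ∈ Set.range u) ∧
    (∀ y₁ y₂ : F, v y₁ = 0 → y₂ ∈ Set.range u → ⟪y₁, y₂⟫ = 0) := by
  have hadj : CStarModuleRight.IsAdjoint A u v := hv
  have hvuv := hadj.map_map_map_eq hpi
  exact ⟨isClosed_range_of_comp_comp_eq u.continuous v.continuous hpi,
    isClosed_range_of_comp_comp_eq v.continuous u.continuous hvuv,
    existsUnique_add_of_map_eq_zero_of_mem_range hpi hvuv,
    fun _ _ => hadj.inner_eq_zero_of_map_eq_zero,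
    existsUnique_add_of_map_eq_zero_of_mem_range hvuv hpi,
    fun _ _ => hadj.symm.inner_eq_zero_of_map_eq_zero⟩
end

section
/- Let A be a C*-algebra and E a Hilbert A-module. For every x ∈ E there exists a unique y ∈ E such that x = y · ⟪y, y⟫ (the module action of the element ⟪y,y⟫ ∈ A on y). (The element y is obtained as the limit of x · fₙ(√⟪x,x⟫) with fₙ(t) = t^{1/3}(1/n + t)^{-1}.) -/
open scoped RightActions

variable {A : Type*} [CStarAlgebra A] [PartialOrder A] [StarOrderedRing A]
variable {E : Type*} [NormedAddCommGroup E] [NormedSpace ℂ E] [SMul Aᵐᵒᵖ E]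
  [CStarModuleRight A E] [CompleteSpace E]

local notation "⟪" x ", " y "⟫" => inner (𝕜 := A) x y

/-!
Put `a = ⟪x, x⟫` and `q = a ^ (1/6)`, and approximate `y = a ^ (-1/3) • x` by
`y_δ = (δ² + q²)⁻¹ • x`, computed in the continuous functional calculus of `q`. Whenever
`⟪z, z⟫ = q ^ (2n)`, the C⋆-identity gives `‖f(q) • z‖ ≤ sup_{u ∈ σ(q)} |uⁿ f(u)|`, so every
estimate reduces to the scalar bound `|u - u³ / (δ² + u²)| ≤ δ / 2`. Hence `y_δ` is Cauchy as
`δ → 0⁺`, and its limit `y` satisfies `⟪y, y⟫ = q²` and `q² • y = x`. Conversely, if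
`x = ⟪y, y⟫ • y` then `⟪x, x⟫ = ⟪y, y⟫³`, so `q² = ⟪y, y⟫` and the same bound shows `y_δ → y`;
this gives uniqueness.
-/

open scoped InnerProductSpace NNReal
open Filter Topology

namespace CFC

variable {B : Type*} [PartialOrder B] [Ring B] [StarRing B] [TopologicalSpace B]
  [StarOrderedRing B] [Algebra ℝ B] [ContinuousFunctionalCalculus ℝ B IsSelfAdjoint]
  [NonnegSpectrumClass ℝ B] [IsSemitopologicalRing B] [T2Space B]

lemma nnrpow_natCast (a : B) {n : ℕ} (hn : n ≠ 0) (ha : 0 ≤ a := by cfc_tac) :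
    a ^ (n : ℝ≥0) = a ^ n := by
  rw [nnrpow_eq_rpow (by positivity), NNReal.coe_natCast, rpow_natCast a n]

lemma nnrpow_inv_natCast_pow (a : B) {n : ℕ} (hn : n ≠ 0) (ha : 0 ≤ a := by cfc_tac) :
    (a ^ (n⁻¹ : ℝ≥0)) ^ n = a := by
  rw [← nnrpow_natCast _ hn, nnrpow_inv_nnrpow a (Nat.cast_ne_zero.2 hn)]

end CFC

lemma abs_le_norm_of_mem_spectrum {B : Type*} [CStarAlgebra B] {a : B} {u : ℝ}
    (hu : u ∈ spectrum ℝ a) : |u| ≤ ‖a‖ := by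
  cases subsingleton_or_nontrivial B
  · simp [spectrum.of_subsingleton] at hu
  · exact spectrum.norm_le_norm_of_mem hu

lemma tendsto_nhdsGT_zero_of_norm_sub_le {G : Type*} [SeminormedAddCommGroup G] {s : ℝ → G}
    {L : G} (C : ℝ) (h : ∀ δ > 0, ‖s δ - L‖ ≤ C * δ) : Tendsto s (𝓝[>] 0) (𝓝 L) := by
  have hC : Tendsto (fun δ : ℝ => C * δ) (𝓝[>] 0) (𝓝 0) := by
    simpa using (tendsto_id.const_mul C).mono_left (nhdsWithin_le_nhds (a := (0 : ℝ)))
  exact tendsto_iff_norm_sub_tendsto_zero.2 <|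
    squeeze_zero' (Eventually.of_forall fun _ => norm_nonneg _)
      (eventually_nhdsWithin_of_forall h) hC

noncomputable def invSqApprox (δ u : ℝ) : ℝ := (δ ^ 2 + u ^ 2)⁻¹

lemma continuous_invSqApprox {δ : ℝ} (hδ : δ ≠ 0) : Continuous (invSqApprox δ) :=
  Continuous.inv₀ (by fun_prop) fun u => by positivity

lemma abs_sub_pow_three_mul_invSqApprox_le {δ : ℝ} (hδ : 0 < δ) (u : ℝ) :
    |u - u ^ 3 * invSqApprox δ u| ≤ δ / 2 := by
  have hd : 0 < δ ^ 2 + u ^ 2 := by positivity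
  have hsub : u - u ^ 3 * invSqApprox δ u = u * δ ^ 2 / (δ ^ 2 + u ^ 2) := by
    rw [invSqApprox]; field_simp; ring
  rw [hsub, abs_div, abs_of_pos hd, div_le_iff₀ hd, abs_mul, abs_of_nonneg (sq_nonneg δ)]
  nlinarith [sq_nonneg (δ - |u|), sq_abs u, abs_nonneg u]

lemma abs_pow_three_mul_invSqApprox_le (δ u : ℝ) : |u ^ 3 * invSqApprox δ u| ≤ |u| := by
  rw [invSqApprox, pow_succ', mul_assoc, abs_mul]
  refine mul_le_of_le_one_right (abs_nonneg u) ?_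
  rw [abs_of_nonneg (by positivity)]
  exact mul_inv_le_one_of_le₀ (le_add_of_nonneg_left (sq_nonneg δ)) (by positivity)

namespace CStarModule

section Module

variable {B F : Type*} [Ring B] [StarRing B] [Module ℂ B] [StarModule ℂ B] [PartialOrder B]
  [Norm B] [AddCommGroup F] [Module ℂ F] [SMul B F] [Norm F] [CStarModule B F]

theorem ext_inner_left {u v : F} (h : ∀ w, ⟪w, u⟫_B = ⟪w, v⟫_B) : u = v := by
  rw [← sub_eq_zero, ← inner_self (A := B), inner_sub_right, h, sub_self]

variable (B F) in
abbrev toModule : Module B F where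
  one_smul u := ext_inner_left (B := B) fun w => by rw [inner_op_smul_right, one_mul]
  mul_smul c d u := ext_inner_left (B := B) fun w => by
    simp only [inner_op_smul_right, mul_assoc]
  smul_zero c := ext_inner_left (B := B) fun w => by
    simp only [inner_op_smul_right, inner_zero_right, mul_zero]
  smul_add c u v := ext_inner_left (B := B) fun w => by
    simp only [inner_op_smul_right, inner_add_right, mul_add]
  add_smul c d u := ext_inner_left (B := B) fun w => by
    simp only [inner_op_smul_right, inner_add_right, add_mul]
  zero_smul u := ext_inner_left (B := B) fun w => by
    simp only [inner_op_smul_right, inner_zero_right, zero_mul]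

end Module

lemma norm_smul_le {B F : Type*} [NonUnitalCStarAlgebra B] [PartialOrder B] [SMul B F]
    [NormedAddCommGroup F] [NormedSpace ℂ F] [CStarModule B F] (c : B) (u : F) :
    ‖c • u‖ ≤ ‖c‖ * ‖u‖ := by
  refine (pow_le_pow_iff_left₀ (norm_nonneg _) (by positivity) two_ne_zero).mp ?_
  calc ‖c • u‖ ^ 2 = ‖c * ⟪u, u⟫_B * star c‖ := by
        rw [norm_sq_eq B, inner_op_smul_right, inner_op_smul_left, mul_assoc]
    _ ≤ ‖c‖ * ‖⟪u, u⟫_B‖ * ‖star c‖ := norm_mul₃_le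
    _ = (‖c‖ * ‖u‖) ^ 2 := by rw [norm_star, ← norm_sq_eq B]; ring

section CStarAlgebra

variable {B F : Type*} [CStarAlgebra B] [PartialOrder B] [SMul B F]
  [NormedAddCommGroup F] [NormedSpace ℂ F] [CStarModule B F]

attribute [local instance] toModule

lemma continuous_const_smul (c : B) : Continuous fun u : F => c • u :=
  AddMonoidHomClass.continuous_of_bound (DistribSMul.toAddMonoidHom F c) ‖c‖ (norm_smul_le c)

variable {q : B} {n : ℕ} {z : F}

lemma inner_cfc_smul_self (hz : ⟪z, z⟫_B = q ^ (2 * n)) (f : ℝ → ℝ)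
    (hf : ContinuousOn f (spectrum ℝ q) := by cfc_cont_tac) (hq : IsSelfAdjoint q := by cfc_tac) :
    ⟪cfc f q • z, cfc f q • z⟫_B = cfc (fun u => (u ^ n * f u) ^ 2) q := by
  rw [inner_op_smul_right, inner_op_smul_left, hz, (cfc_predicate f q).star_eq,
    ← cfc_pow_id (R := ℝ) q, ← cfc_mul .., ← cfc_mul ..]
  exact cfc_congr fun u _ => by ring

lemma norm_cfc_smul_le (hz : ⟪z, z⟫_B = q ^ (2 * n)) {f : ℝ → ℝ} {M : ℝ} (hM : 0 ≤ M)
    (hfM : ∀ u ∈ spectrum ℝ q, |u ^ n * f u| ≤ M)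
    (hf : ContinuousOn f (spectrum ℝ q) := by cfc_cont_tac) (hq : IsSelfAdjoint q := by cfc_tac) :
    ‖cfc f q • z‖ ≤ M := by
  refine (pow_le_pow_iff_left₀ (norm_nonneg _) hM two_ne_zero).mp ?_
  rw [norm_sq_eq B, inner_cfc_smul_self hz f]
  refine norm_cfc_le (by positivity) fun u hu => ?_
  rw [Real.norm_eq_abs, abs_pow]
  exact pow_le_pow_left₀ (abs_nonneg _) (hfM u hu) 2

lemma norm_cfc_smul_sub_cfc_smul_le (hz : ⟪z, z⟫_B = q ^ (2 * n)) {f g : ℝ → ℝ} {M : ℝ}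
    (hM : 0 ≤ M) (hfgM : ∀ u ∈ spectrum ℝ q, |u ^ n * (f u - g u)| ≤ M)
    (hf : ContinuousOn f (spectrum ℝ q) := by cfc_cont_tac)
    (hg : ContinuousOn g (spectrum ℝ q) := by cfc_cont_tac) (hq : IsSelfAdjoint q := by cfc_tac) :
    ‖cfc f q • z - cfc g q • z‖ ≤ M := by
  rw [← sub_smul, ← cfc_sub f g q]
  exact norm_cfc_smul_le hz hM hfgM

lemma norm_cfc_invSqApprox_smul_sq_smul_sub_le (hz : ⟪z, z⟫_B = q ^ (2 * (n + 1))) {δ : ℝ}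
    (hδ : 0 < δ) (hq : IsSelfAdjoint q := by cfc_tac) :
    ‖cfc (invSqApprox δ) q • (q ^ 2 • z) - z‖ ≤ ‖q‖ ^ n * (δ / 2) := by
  have hφ := (continuous_invSqApprox hδ.ne').continuousOn (s := spectrum ℝ q)
  have h := norm_cfc_smul_sub_cfc_smul_le hz (f := fun u => invSqApprox δ u * u ^ 2)
    (g := fun _ => 1) (M := ‖q‖ ^ n * (δ / 2)) (by positivity) fun u hu => by
      calc |u ^ (n + 1) * (invSqApprox δ u * u ^ 2 - 1)|
          = |u| ^ n * |u - u ^ 3 * invSqApprox δ u| := by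
            rw [← abs_pow, ← abs_mul, ← abs_neg]; congr 1; ring
        _ ≤ ‖q‖ ^ n * (δ / 2) := by
            gcongr
            · exact abs_le_norm_of_mem_spectrum hu
            · exact abs_sub_pow_three_mul_invSqApprox_le hδ u
  rwa [cfc_const_one (R := ℝ) (a := q), one_smul, cfc_mul .., cfc_pow_id (R := ℝ) q 2,
    ← smul_smul] at h

variable [StarOrderedRing B]

variable (B) in
noncomputable def cubeRootApprox (x : F) (δ : ℝ) : F :=
  cfc (invSqApprox δ) (⟪x, x⟫_B ^ (6⁻¹ : ℝ≥0)) • x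

variable {x : F} {δ : ℝ}

lemma inner_self_eq_nnrpow_inv_six_pow (x : F) :
    ⟪x, x⟫_B = (⟪x, x⟫_B ^ (6⁻¹ : ℝ≥0)) ^ 6 := by
  simpa using (CFC.nnrpow_inv_natCast_pow ⟪x, x⟫_B (n := 6) (by norm_num) inner_self_nonneg).symm

lemma norm_cubeRootApprox_sub_le {δ' : ℝ} (hδ : 0 < δ) (hδ' : 0 < δ') :
    ‖cubeRootApprox B x δ - cubeRootApprox B x δ'‖ ≤ δ / 2 + δ' / 2 := by
  refine norm_cfc_smul_sub_cfc_smul_le (n := 3) (inner_self_eq_nnrpow_inv_six_pow x)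
    (by positivity) (fun u _ => ?_) (continuous_invSqApprox hδ.ne').continuousOn
    (continuous_invSqApprox hδ'.ne').continuousOn
  calc |u ^ 3 * (invSqApprox δ u - invSqApprox δ' u)|
      = |(u - u ^ 3 * invSqApprox δ' u) - (u - u ^ 3 * invSqApprox δ u)| := by congr 1; ring
    _ ≤ δ' / 2 + δ / 2 := (abs_sub _ _).trans (add_le_add
        (abs_sub_pow_three_mul_invSqApprox_le hδ' u) (abs_sub_pow_three_mul_invSqApprox_le hδ u))
    _ = δ / 2 + δ' / 2 := add_comm _ _

lemma norm_inner_cubeRootApprox_sub_le (hδ : 0 < δ) :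
    ‖⟪cubeRootApprox B x δ, cubeRootApprox B x δ⟫_B - (⟪x, x⟫_B ^ (6⁻¹ : ℝ≥0)) ^ 2‖ ≤
      ‖⟪x, x⟫_B ^ (6⁻¹ : ℝ≥0)‖ * δ := by
  set q := ⟪x, x⟫_B ^ (6⁻¹ : ℝ≥0)
  have hφ := (continuous_invSqApprox hδ.ne').continuousOn (s := spectrum ℝ q)
  rw [cubeRootApprox, inner_cfc_smul_self (n := 3) (inner_self_eq_nnrpow_inv_six_pow x) _,
    ← cfc_pow_id (R := ℝ) q 2, ← cfc_sub ..]
  refine norm_cfc_le (by positivity) fun u hu => ?_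
  have hu' : |u| ≤ ‖q‖ := abs_le_norm_of_mem_spectrum hu
  calc ‖(u ^ 3 * invSqApprox δ u) ^ 2 - u ^ 2‖
      = |u - u ^ 3 * invSqApprox δ u| * |u ^ 3 * invSqApprox δ u + u| := by
        rw [Real.norm_eq_abs, ← abs_mul, ← abs_neg]; congr 1; ring
    _ ≤ δ / 2 * (2 * ‖q‖) := by
        gcongr
        · exact abs_sub_pow_three_mul_invSqApprox_le hδ u
        · linarith [abs_add_le (u ^ 3 * invSqApprox δ u) u, abs_pow_three_mul_invSqApprox_le δ u]
    _ = ‖q‖ * δ := by ring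

lemma norm_sq_smul_cubeRootApprox_sub_le (hδ : 0 < δ) :
    ‖(⟪x, x⟫_B ^ (6⁻¹ : ℝ≥0)) ^ 2 • cubeRootApprox B x δ - x‖ ≤
      ‖⟪x, x⟫_B ^ (6⁻¹ : ℝ≥0)‖ ^ 2 * (δ / 2) := by
  set q := ⟪x, x⟫_B ^ (6⁻¹ : ℝ≥0)
  have hcomm : Commute (q ^ 2) (cfc (invSqApprox δ) q) := by
    rw [← cfc_pow_id (R := ℝ) q 2]
    exact cfc_commute_cfc _ _ q
  rw [cubeRootApprox, smul_smul, hcomm.eq, ← smul_smul]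
  exact norm_cfc_invSqApprox_smul_sq_smul_sub_le (n := 2) (inner_self_eq_nnrpow_inv_six_pow x) hδ

lemma norm_cubeRootApprox_sub_le_of_eq {y : F} (hy : x = ⟪y, y⟫_B • y) (hδ : 0 < δ) :
    ‖cubeRootApprox B x δ - y‖ ≤ δ / 2 := by
  have hb : 0 ≤ ⟪y, y⟫_B := inner_self_nonneg
  have hxx : ⟪x, x⟫_B = ⟪y, y⟫_B ^ (3 : ℝ≥0) := by
    rw [CFC.nnrpow_three _ hb, hy, inner_op_smul_right, inner_op_smul_left,
      hb.isSelfAdjoint.star_eq, mul_assoc]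
  have hq : (⟪x, x⟫_B ^ (6⁻¹ : ℝ≥0)) ^ 2 = ⟪y, y⟫_B := by
    rw [hxx, CFC.nnrpow_nnrpow, show (3 : ℝ≥0) * 6⁻¹ = ((2 : ℕ) : ℝ≥0)⁻¹ by norm_num,
      CFC.nnrpow_inv_natCast_pow _ two_ne_zero]
  have := norm_cfc_invSqApprox_smul_sq_smul_sub_le (n := 0) hq.symm hδ
  rwa [hq, ← hy, pow_zero, one_mul] at this

lemma tendsto_cubeRootApprox_of_eq {y : F} (hy : x = ⟪y, y⟫_B • y) :
    Tendsto (cubeRootApprox B x) (𝓝[>] 0) (𝓝 y) :=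
  tendsto_nhdsGT_zero_of_norm_sub_le (1 / 2) fun _ hδ =>
    (norm_cubeRootApprox_sub_le_of_eq hy hδ).trans_eq (by ring)

lemma exists_tendsto_cubeRootApprox [CompleteSpace F] (x : F) :
    ∃ y, Tendsto (cubeRootApprox B x) (𝓝[>] 0) (𝓝 y) := by
  refine cauchy_map_iff_exists_tendsto.mp (Metric.cauchy_iff.mpr ⟨inferInstance, fun ε hε => ?_⟩)
  refine ⟨cubeRootApprox B x '' Set.Ioo (0 : ℝ) ε, image_mem_map (Ioo_mem_nhdsGT hε), ?_⟩
  rintro _ ⟨δ, hδ, rfl⟩ _ ⟨δ', hδ', rfl⟩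
  rw [dist_eq_norm]
  linarith [norm_cubeRootApprox_sub_le (B := B) (x := x) hδ.1 hδ'.1, hδ.2, hδ'.2]

lemma eq_inner_self_smul_of_tendsto {y : F} (hy : Tendsto (cubeRootApprox B x) (𝓝[>] 0) (𝓝 y)) :
    x = ⟪y, y⟫_B • y := by
  have h_inner : ⟪y, y⟫_B = (⟪x, x⟫_B ^ (6⁻¹ : ℝ≥0)) ^ 2 :=
    tendsto_nhds_unique ((continuous_inner.tendsto (y, y)).comp (hy.prodMk_nhds hy))
      (tendsto_nhdsGT_zero_of_norm_sub_le _ fun _ hδ => norm_inner_cubeRootApprox_sub_le hδ)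
  have h_smul : (⟪x, x⟫_B ^ (6⁻¹ : ℝ≥0)) ^ 2 • y = x :=
    tendsto_nhds_unique (((CStarModule.continuous_const_smul _).tendsto y).comp hy)
      (tendsto_nhdsGT_zero_of_norm_sub_le (‖⟪x, x⟫_B ^ (6⁻¹ : ℝ≥0)‖ ^ 2 / 2) fun _ hδ =>
        (norm_sq_smul_cubeRootApprox_sub_le hδ).trans_eq (by ring))
  rw [h_inner, h_smul]

theorem existsUnique_eq_inner_self_smul [CompleteSpace F] (x : F) :
    ∃! y : F, x = ⟪y, y⟫_B • y := by
  obtain ⟨y, hy⟩ := exists_tendsto_cubeRootApprox (B := B) x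
  exact ⟨y, eq_inner_self_smul_of_tendsto hy,
    fun z hz => tendsto_nhds_unique (tendsto_cubeRootApprox_of_eq hz) hy⟩

end CStarAlgebra

end CStarModule

open MulOpposite in
/-- Since `y <• a = op a • y`, the inner product `op ⟪x, y⟫` turns a Hilbert module with a right
action into one in Mathlib's convention, over the opposite algebra. -/
instance CStarModuleRight.toCStarModuleMulOpposite_s16 {B F : Type*} [NonUnitalCStarAlgebra B]
    [AddCommGroup F] [Module ℂ F] [PartialOrder B] [SMul Bᵐᵒᵖ F] [Norm F]
    [CStarModuleRight B F] : CStarModule Bᵐᵒᵖ F where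
  inner x y := op (inner B x y)
  inner_add_right := by simp [CStarModuleRight.inner_add_right]
  inner_self_nonneg := op_nonneg.2 CStarModuleRight.inner_self_nonneg
  inner_self := by simp [CStarModuleRight.inner_self]
  inner_op_smul_right {a x y} := by
    rw [← op_unop a, ← op_mul]
    exact congrArg op CStarModuleRight.inner_op_smul_right
  inner_smul_right_complex := by simp [CStarModuleRight.inner_smul_right_complex]
  star_inner x y := by rw [← op_star, CStarModuleRight.star_inner]
  norm_eq_sqrt_norm_inner_self x := by
    rw [norm_op]; exact CStarModuleRight.norm_eq_sqrt_norm_inner_self x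

/-- In a Hilbert C*-module, every element x factors uniquely as x = y · ⟪y, y⟫. -/
theorem exists_unique_cube_root (x : E) :
    ∃! y : E, x = y <• ⟪y, y⟫ :=
  CStarModule.existsUnique_eq_inner_self_smul (B := Aᵐᵒᵖ) x
end
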